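/- arXiv:1910.07592 — 5 statements merged into one kernel-verified Lean document; each statement's English description precedes it below -/
import Mathlib

section
/- Let G be a group with G = KH where K is a central subgroup and H a subgroup. If (G₁, G₂) is a dual pair in G (i.e. C_G(G₁) = G₂ and C_G(G₂) = G₁), then (G₁ ∩ H, G₂ ∩ H) is a dual pair in H, i.e. C_H(G₁ ∩ H) = G₂ ∩ H and C_H(G₂ ∩ H) = G₁ ∩ H. -/
/-!
Since `K` is central, it lies in every centralizer, so `K ≤ G₁` and `K ≤ G₂`. For a subgroup `S ⊇ K`,
every `g ∈ S` factors as `g = k * h` with `k ∈ K` and `h = k⁻¹ * g ∈ S ⊓ H`; as `k` is central,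
commuting with `S ⊓ H` is the same as commuting with `S`. Hence `C(Gᵢ ⊓ H) ⊓ H = C(Gᵢ) ⊓ H`.
-/

namespace Subgroup

variable {G : Type*} [Group G]

theorem centralizer_inf_eq_centralizer {K H S : Subgroup G} (hK : K ≤ center G)
    (hKH : ∀ g : G, ∃ k ∈ K, ∃ h ∈ H, g = k * h) (hKS : K ≤ S) :
    centralizer ((S ⊓ H : Subgroup G) : Set G) = centralizer (S : Set G) := by
  refine le_antisymm ?_ (centralizer_le inf_le_left)
  intro x hx
  rw [mem_centralizer_iff] at hx ⊢
  intro g hg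
  obtain ⟨k, hk, h, hh, rfl⟩ := hKH g
  have hhS : h ∈ S := by simpa using S.mul_mem (S.inv_mem (hKS hk)) hg
  have hkx : k * x = x * k := (mem_center_iff.mp (hK hk) x).symm
  rw [mul_assoc, hx h ⟨hhS, hh⟩, ← mul_assoc, hkx, mul_assoc]

end Subgroup

theorem stmt7 {G : Type*} [Group G] (K H : Subgroup G)
    (hK : K ≤ Subgroup.center G)
    (hKH : ∀ g : G, ∃ k ∈ K, ∃ h ∈ H, g = k * h)
    (G₁ G₂ : Subgroup G)
    (h₁ : Subgroup.centralizer (G₁ : Set G) = G₂)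
    (h₂ : Subgroup.centralizer (G₂ : Set G) = G₁) :
    Subgroup.centralizer ((G₁ ⊓ H : Subgroup G) : Set G) ⊓ H = G₂ ⊓ H ∧
    Subgroup.centralizer ((G₂ ⊓ H : Subgroup G) : Set G) ⊓ H = G₁ ⊓ H := by
  have hK₁ : K ≤ G₁ := h₂ ▸ hK.trans (Subgroup.center_le_centralizer _)
  have hK₂ : K ≤ G₂ := h₁ ▸ hK.trans (Subgroup.center_le_centralizer _)
  rw [Subgroup.centralizer_inf_eq_centralizer hK hKH hK₁,
    Subgroup.centralizer_inf_eq_centralizer hK hKH hK₂, h₁, h₂]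
  exact ⟨rfl, rfl⟩
end

section
/- Let G be a group with G = KH where K is a central subgroup and H a subgroup. If (H₁, H₂) is a dual pair in H (i.e. C_H(H₁) = H₂ and C_H(H₂) = H₁), then (KH₁, KH₂) is a dual pair in G: C_G(KH₁) = KH₂ and C_G(KH₂) = KH₁. -/
/-! Since `K` is central, `C_G(K H₁) = C_G(H₁)`; this centralizer contains `K`, so `G = K H` splits
it as `K (C_G(H₁) ∩ H) = K C_H(H₁) = K H₂`. -/

open Pointwise

namespace Subgroup

variable {G : Type*} [Group G]

theorem centralizer_mul_of_le_center {K : Subgroup G} (hK : K ≤ center G) (S : Set G) :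
    centralizer ((K : Set G) * S) = centralizer S := by
  refine le_antisymm (centralizer_le fun s hs => ⟨1, K.one_mem, s, hs, one_mul s⟩) ?_
  rintro g hg _ ⟨k, hk, s, hs, rfl⟩
  have hkg : k * g = g * k := ((mem_center_iff.1 (hK hk)) g).symm
  rw [mul_assoc, mem_centralizer_iff.1 hg s hs, ← mul_assoc, hkg, mul_assoc]

theorem coe_eq_mul_coe_inf_of_le {K H C : Subgroup G}
    (hKH : ∀ g : G, ∃ k ∈ K, ∃ h ∈ H, g = k * h) (hKC : K ≤ C) :
    (C : Set G) = (K : Set G) * ((C ⊓ H : Subgroup G) : Set G) := by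
  ext g
  constructor
  · intro hg
    obtain ⟨k, hk, h, hh, rfl⟩ := hKH g
    have hhC : h ∈ C := by simpa using C.mul_mem (C.inv_mem (hKC hk)) hg
    exact ⟨k, hk, h, ⟨hhC, hh⟩, rfl⟩
  · rintro ⟨k, hk, h, hh, rfl⟩
    exact C.mul_mem (hKC hk) hh.1

theorem coe_centralizer_center_mul {K H L : Subgroup G} (hK : K ≤ center G)
    (hKH : ∀ g : G, ∃ k ∈ K, ∃ h ∈ H, g = k * h) :
    (centralizer ((K : Set G) * (L : Set G)) : Set G) =
      (K : Set G) * ((centralizer (L : Set G) ⊓ H : Subgroup G) : Set G) := by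
  rw [centralizer_mul_of_le_center hK]
  exact coe_eq_mul_coe_inf_of_le hKH (hK.trans (center_le_centralizer _))

end Subgroup

theorem stmt8_general {G : Type*} [Group G] (K H : Subgroup G)
    (hK : K ≤ Subgroup.center G)
    (hKH : ∀ g : G, ∃ k ∈ K, ∃ h ∈ H, g = k * h)
    (H₁ H₂ : Subgroup G)
    (hc₁ : Subgroup.centralizer (H₁ : Set G) ⊓ H = H₂)
    (hc₂ : Subgroup.centralizer (H₂ : Set G) ⊓ H = H₁) :
    (Subgroup.centralizer ((K : Set G) * (H₁ : Set G)) : Set G)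
        = (K : Set G) * (H₂ : Set G) ∧
    (Subgroup.centralizer ((K : Set G) * (H₂ : Set G)) : Set G)
        = (K : Set G) * (H₁ : Set G) := by
  rw [Subgroup.coe_centralizer_center_mul hK hKH, Subgroup.coe_centralizer_center_mul hK hKH,
    hc₁, hc₂]
  exact ⟨rfl, rfl⟩

theorem stmt8 {G : Type*} [Group G] (K H : Subgroup G)
    (hK : K ≤ Subgroup.center G)
    (hKH : ∀ g : G, ∃ k ∈ K, ∃ h ∈ H, g = k * h)
    (H₁ H₂ : Subgroup G) (hH₁ : H₁ ≤ H) (hH₂ : H₂ ≤ H)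
    (hc₁ : Subgroup.centralizer (H₁ : Set G) ⊓ H = H₂)
    (hc₂ : Subgroup.centralizer (H₂ : Set G) ⊓ H = H₁) :
    (Subgroup.centralizer ((K : Set G) * (H₁ : Set G)) : Set G)
        = (K : Set G) * (H₂ : Set G) ∧
    (Subgroup.centralizer ((K : Set G) * (H₂ : Set G)) : Set G)
        = (K : Set G) * (H₁ : Set G) :=
  stmt8_general K H hK hKH H₁ H₂ hc₁ hc₂
end

section
/- Let G be a group with G = KH where K is central and H a subgroup, and let (H₁, H₂) be a dual pair in H. Then (K·H₁) ∩ H = H₁ and (K·H₂) ∩ H = H₂. -/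
open Pointwise

lemma Subgroup.mul_inter_eq_of_centralizer_inf_eq {G : Type*} [Group G] {K H H₁ : Subgroup G}
    {S : Set G} (hK : K ≤ Subgroup.center G) (hc : Subgroup.centralizer S ⊓ H = H₁) :
    ((K : Set G) * (H₁ : Set G)) ∩ (H : Set G) = (H₁ : Set G) := by
  subst hc
  refine subset_antisymm ?_ fun x hx => ⟨⟨1, K.one_mem, x, hx, one_mul x⟩, hx.2⟩
  rintro _ ⟨⟨k, hk, h, hh, rfl⟩, hkh⟩
  exact ⟨mul_mem (Subgroup.center_le_centralizer S (hK hk)) hh.1, hkh⟩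

theorem stmt9_general {G : Type*} [Group G] (K H : Subgroup G)
    (hK : K ≤ Subgroup.center G)
    (H₁ H₂ : Subgroup G)
    (hc₁ : Subgroup.centralizer (H₁ : Set G) ⊓ H = H₂)
    (hc₂ : Subgroup.centralizer (H₂ : Set G) ⊓ H = H₁) :
    ((K : Set G) * (H₁ : Set G)) ∩ (H : Set G) = (H₁ : Set G) ∧
    ((K : Set G) * (H₂ : Set G)) ∩ (H : Set G) = (H₂ : Set G) :=
  ⟨Subgroup.mul_inter_eq_of_centralizer_inf_eq hK hc₂,
    Subgroup.mul_inter_eq_of_centralizer_inf_eq hK hc₁⟩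

theorem stmt9 {G : Type*} [Group G] (K H : Subgroup G)
    (hK : K ≤ Subgroup.center G)
    (hKH : ∀ g : G, ∃ k ∈ K, ∃ h ∈ H, g = k * h)
    (H₁ H₂ : Subgroup G) (hH₁ : H₁ ≤ H) (hH₂ : H₂ ≤ H)
    (hc₁ : Subgroup.centralizer (H₁ : Set G) ⊓ H = H₂)
    (hc₂ : Subgroup.centralizer (H₂ : Set G) ⊓ H = H₁) :
    ((K : Set G) * (H₁ : Set G)) ∩ (H : Set G) = (H₁ : Set G) ∧
    ((K : Set G) * (H₂ : Set G)) ∩ (H : Set G) = (H₂ : Set G) :=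
  stmt9_general K H hK H₁ H₂ hc₁ hc₂
end

section
/- Let G be a topological group, N a normal subgroup, π : G → G/N the quotient map, and H a connected subgroup of G. Suppose the set K = { t h t⁻¹ h⁻¹ : t ∈ π⁻¹(C_{G/N}(π(H))), h ∈ H } is discrete. Then C_{G/N}(π(H)) = π(C_G(H)). -/
/-!
For `t` in the preimage of `C_{G/N}(π(H))`, the map `h ↦ t h t⁻¹ h⁻¹` is continuous on the
connected set `H` and takes values in the discrete set `K`, so it is constant, equal to its value
`1` at `h = 1`. Hence `t` centralizes `H`. The reverse inclusion holds for any homomorphism.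
-/

open Set

theorem Subgroup.mem_centralizer_of_mapsTo_commutator_isDiscrete {G : Type*} [Group G]
    [TopologicalSpace G] [ContinuousMul G] [ContinuousInv G] {S T : Set G}
    (hS : IsPreconnected S) (hS₁ : 1 ∈ S) (hT : IsDiscrete T) {t : G}
    (hmaps : MapsTo (fun h => t * h * t⁻¹ * h⁻¹) S T) : t ∈ Subgroup.centralizer S := by
  intro h hh
  have hcomm : t * h * t⁻¹ * h⁻¹ = t * 1 * t⁻¹ * 1⁻¹ :=
    hS.constant_of_mapsTo hT (by fun_prop) hmaps hh hS₁
  rw [mul_one, inv_one, mul_one, mul_inv_cancel, mul_inv_eq_one, mul_inv_eq_iff_eq_mul] at hcomm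
  exact hcomm.symm

theorem stmt12 {G : Type*} [Group G] [TopologicalSpace G] [IsTopologicalGroup G]
    (N : Subgroup G) [N.Normal] (H : Subgroup G) (hH : IsConnected (H : Set G))
    (hK : DiscreteTopology
      {g : G | ∃ t h : G,
        QuotientGroup.mk' N t ∈
          Subgroup.centralizer ((H.map (QuotientGroup.mk' N)) : Set (G ⧸ N)) ∧
        h ∈ H ∧ g = t * h * t⁻¹ * h⁻¹}) :
    Subgroup.centralizer ((H.map (QuotientGroup.mk' N)) : Set (G ⧸ N))
      = (Subgroup.centralizer (H : Set G)).map (QuotientGroup.mk' N) := by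
  refine le_antisymm (fun q hq => ?_) ?_
  · obtain ⟨t, rfl⟩ := QuotientGroup.mk'_surjective N q
    exact ⟨t, Subgroup.mem_centralizer_of_mapsTo_commutator_isDiscrete hH.isPreconnected H.one_mem
      (isDiscrete_iff_discreteTopology.mpr hK) fun h hh => ⟨t, h, hq, hh, rfl⟩, rfl⟩
  · simpa only [Subgroup.coe_map] using
      Subgroup.map_centralizer_le_centralizer_image (H : Set G) (QuotientGroup.mk' N)
end

section
/- Let G be a group, K a central subgroup, H = G/K, and suppose the short exact sequence 1 → K → G → H → 1 splits via a section α : H → G. Then G = K · α(H), and the dual pairs in α(H) ≅ H are in bijection with the dual pairs in G, given in one direction by (H₁, H₂) ↦ (K·H₁, K·H₂) and in the other by intersection with α(H). -/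
/-!
Since `K` is central, adjoining `K` to a subgroup does not change its centralizer, and every
centralizer contains `K`. As `α(H)` is a complement of the normal subgroup `K`, Dedekind's
modular law makes `A ↦ K ⊔ A` and `C ↦ C ⊓ α(H)` mutually inverse between subgroups of `α(H)`
and subgroups of `G` containing `K`, and these maps carry centralizers to centralizers.
-/

namespace MonoidHom

variable {G H : Type*} [Group G] [Group H] {f : G →* H} {s : H →* G}

theorem ker_inf_range_eq_bot_of_rightInverse (hs : Function.RightInverse s f) :
    f.ker ⊓ s.range = ⊥ := by
  rw [eq_bot_iff]
  rintro _ ⟨hx, y, rfl⟩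
  have hy : y = 1 := (hs y).symm.trans (mem_ker.mp hx)
  rw [Subgroup.mem_bot, hy, map_one]

theorem ker_sup_range_eq_top_of_rightInverse (hs : Function.RightInverse s f) :
    f.ker ⊔ s.range = ⊤ := by
  refine eq_top_iff.mpr fun g _ ↦ ?_
  have hg : g * (s (f g))⁻¹ ∈ f.ker := by
    rw [mem_ker, map_mul, map_inv, hs, mul_inv_cancel]
  have hr : s (f g) ∈ s.range := ⟨f g, rfl⟩
  simpa using Subgroup.mul_mem_sup hg hr

end MonoidHom

namespace Subgroup

variable {G : Type*} [Group G]

theorem sup_inf_assoc_of_le_of_normal {K S : Subgroup G} [K.Normal] (R : Subgroup G)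
    (hKS : K ≤ S) : (K ⊔ R) ⊓ S = K ⊔ R ⊓ S :=
  SetLike.coe_injective <| by
    rw [coe_inf, normal_mul, normal_mul, mul_inf_assoc K R S hKS]

theorem inf_sup_assoc_of_le_of_normal {R A : Subgroup G} (K : Subgroup G) [K.Normal]
    (hAR : A ≤ R) : R ⊓ K ⊔ A = R ⊓ (K ⊔ A) := by
  have hA : A ≤ normalizer ((R ⊓ K : Subgroup G) : Set G) :=
    (le_inf (hAR.trans le_normalizer) le_normalizer_of_normal).trans
      inf_normalizer_le_normalizer_inf
  exact SetLike.coe_injective <| by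
    rw [coe_mul_of_right_le_normalizer_left _ _ hA, inf_mul_assoc R K A hAR, coe_inf, normal_mul]

theorem centralizer_sup (H K : Subgroup G) :
    centralizer ((H ⊔ K : Subgroup G) : Set G) = centralizer H ⊓ centralizer K := by
  rw [sup_eq_closure, centralizer_closure]
  ext
  simp [mem_centralizer_iff, or_imp, forall_and]

theorem centralizer_sup_of_le_center {K : Subgroup G} (hK : K ≤ center G) (A : Subgroup G) :
    centralizer ((K ⊔ A : Subgroup G) : Set G) = centralizer A := by
  rw [centralizer_sup, centralizer_eq_top_iff_subset.mpr hK, top_inf_eq]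

def IsDualPair (A B : Subgroup G) : Prop :=
  centralizer (A : Set G) = B ∧ centralizer (B : Set G) = A

def IsDualPairIn (R A B : Subgroup G) : Prop :=
  A ≤ R ∧ B ≤ R ∧ centralizer (A : Set G) ⊓ R = B ∧ centralizer (B : Set G) ⊓ R = A

theorem IsDualPair.center_le_left {A B : Subgroup G} (h : IsDualPair A B) : center G ≤ A :=
  h.2 ▸ center_le_centralizer _

theorem IsDualPair.center_le_right {A B : Subgroup G} (h : IsDualPair A B) : center G ≤ B :=
  h.1 ▸ center_le_centralizer _

section Complement

variable {K R : Subgroup G} [K.Normal]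

theorem sup_inf_eq_of_inf_eq_bot (hbot : K ⊓ R = ⊥) {A : Subgroup G} (hA : A ≤ R) :
    (K ⊔ A) ⊓ R = A := by
  rw [inf_comm, ← inf_sup_assoc_of_le_of_normal K hA, inf_comm, hbot, bot_sup_eq]

theorem sup_inf_eq_of_sup_eq_top (htop : K ⊔ R = ⊤) {S : Subgroup G} (hS : K ≤ S) :
    K ⊔ S ⊓ R = S := by
  rw [inf_comm, ← sup_inf_assoc_of_le_of_normal R hS, htop, top_inf_eq]

theorem IsDualPairIn.isDualPair_sup (hK : K ≤ center G) (htop : K ⊔ R = ⊤) {A B : Subgroup G}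
    (h : IsDualPairIn R A B) : IsDualPair (K ⊔ A) (K ⊔ B) := by
  have hKc (S : Set G) : K ≤ centralizer S := hK.trans (center_le_centralizer S)
  constructor
  · rw [centralizer_sup_of_le_center hK, ← h.2.2.1, sup_inf_eq_of_sup_eq_top htop (hKc _)]
  · rw [centralizer_sup_of_le_center hK, ← h.2.2.2, sup_inf_eq_of_sup_eq_top htop (hKc _)]

theorem IsDualPair.isDualPairIn_inf (hK : K ≤ center G) (htop : K ⊔ R = ⊤) {C D : Subgroup G}
    (h : IsDualPair C D) : IsDualPairIn R (C ⊓ R) (D ⊓ R) := by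
  have hC : centralizer ((C ⊓ R : Subgroup G) : Set G) = D := by
    rw [← centralizer_sup_of_le_center hK,
      sup_inf_eq_of_sup_eq_top htop (hK.trans h.center_le_left), h.1]
  have hD : centralizer ((D ⊓ R : Subgroup G) : Set G) = C := by
    rw [← centralizer_sup_of_le_center hK,
      sup_inf_eq_of_sup_eq_top htop (hK.trans h.center_le_right), h.2]
  exact ⟨inf_le_right, inf_le_right, by rw [hC], by rw [hD]⟩

def dualPairEquiv (hK : K ≤ center G) (hbot : K ⊓ R = ⊥) (htop : K ⊔ R = ⊤) :
    {p : Subgroup G × Subgroup G // IsDualPairIn R p.1 p.2} ≃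
      {p : Subgroup G × Subgroup G // IsDualPair p.1 p.2} where
  toFun p := ⟨(K ⊔ p.1.1, K ⊔ p.1.2), p.2.isDualPair_sup hK htop⟩
  invFun q := ⟨(q.1.1 ⊓ R, q.1.2 ⊓ R), q.2.isDualPairIn_inf hK htop⟩
  left_inv p := Subtype.ext <| Prod.ext
    (sup_inf_eq_of_inf_eq_bot hbot p.2.1) (sup_inf_eq_of_inf_eq_bot hbot p.2.2.1)
  right_inv q := Subtype.ext <| Prod.ext
    (sup_inf_eq_of_sup_eq_top htop (hK.trans q.2.center_le_left))
    (sup_inf_eq_of_sup_eq_top htop (hK.trans q.2.center_le_right))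

end Complement

end Subgroup

theorem stmt16 {G : Type*} [Group G] (K : Subgroup G)
    (hK : K ≤ Subgroup.center G) [K.Normal]
    (α : G ⧸ K →* G) (hα : ∀ x : G ⧸ K, QuotientGroup.mk' K (α x) = x) :
    (∀ g : G, ∃ k ∈ K, ∃ h ∈ α.range, g = k * h) ∧
    ∃ e : {p : Subgroup G × Subgroup G //
            p.1 ≤ α.range ∧ p.2 ≤ α.range ∧
            Subgroup.centralizer (p.1 : Set G) ⊓ α.range = p.2 ∧
            Subgroup.centralizer (p.2 : Set G) ⊓ α.range = p.1} ≃
          {p : Subgroup G × Subgroup G //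
            Subgroup.centralizer (p.1 : Set G) = p.2 ∧
            Subgroup.centralizer (p.2 : Set G) = p.1},
      (∀ p, (e p).1 = (K ⊔ p.1.1, K ⊔ p.1.2)) ∧
      (∀ q, (e.symm q).1 = (q.1.1 ⊓ α.range, q.1.2 ⊓ α.range)) := by
  have hbot : K ⊓ α.range = ⊥ := by
    simpa using MonoidHom.ker_inf_range_eq_bot_of_rightInverse hα
  have htop : K ⊔ α.range = ⊤ := by
    simpa using MonoidHom.ker_sup_range_eq_top_of_rightInverse hα
  refine ⟨fun g ↦ ?_, Subgroup.dualPairEquiv hK hbot htop, fun _ ↦ rfl, fun _ ↦ rfl⟩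
  obtain ⟨k, hk, h, hh, hg⟩ := Subgroup.mem_sup_of_normal_left.mp (htop ▸ Subgroup.mem_top g)
  exact ⟨k, hk, h, hh, hg.symm⟩
end
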